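/- Let (J, u, ω, h, P) be a classical solution of the planar non-resistive MHD system in Lagrangian coordinates on ℝ × (0,T) with J > 0 and ρ₀ > 0 everywhere, with ρ₀ differentiable and all partial derivatives appearing below existing and continuous. Then the effective viscous flux G := λ ∂_y u / J − P − |h|²/(8π) satisfies pointwise: ∂_t G − (λ/J) ∂_y( ∂_y G / ρ₀ ) = −γ (∂_y u / J) G + ((2−γ)/(8π)) (∂_y u / J) |h|² − (γ−1) μ |∂_y ω / J|² − (1/(4π J)) h·∂_y ω. -/

import Mathlib

open Real MeasureTheory
open scoped InnerProductSpace

noncomputable section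

/-- The plane `ℝ²` as a Euclidean space, target of the transverse velocity and
magnetic field. -/
abbrev E2 := EuclideanSpace ℝ (Fin 2)

/-- Partial derivative in time of a scalar field `f = f(y, t)`. -/
def pdt (f : ℝ → ℝ → ℝ) (y t : ℝ) : ℝ := deriv (fun s => f y s) t

/-- Partial derivative in space of a scalar field `f = f(y, t)`. -/
def pdy (f : ℝ → ℝ → ℝ) (y t : ℝ) : ℝ := deriv (fun z => f z t) y

/-- Partial derivative in time of an `ℝ²`-valued field. -/
def pdtV (f : ℝ → ℝ → E2) (y t : ℝ) : E2 := deriv (fun s => f y s) t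

/-- Partial derivative in space of an `ℝ²`-valued field. -/
def pdyV (f : ℝ → ℝ → E2) (y t : ℝ) : E2 := deriv (fun z => f z t) y

/-- `(J, u, ω, h, P)` is a classical solution of the planar non-resistive MHD system in
Lagrangian coordinates, for times in the set `S`: all the unknowns are twice continuously
differentiable (in particular all partial derivatives appearing in the system exist and
are continuous) and the five equations hold pointwise. -/
structure IsMHDSolution (lam mu gam : ℝ) (ρ₀ : ℝ → ℝ)
    (J u P : ℝ → ℝ → ℝ) (ω h : ℝ → ℝ → E2) (S : Set ℝ) : Prop where
  smooth_J : ContDiffOn ℝ 2 (fun p : ℝ × ℝ => J p.1 p.2) (Set.univ ×ˢ S)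
  smooth_u : ContDiffOn ℝ 2 (fun p : ℝ × ℝ => u p.1 p.2) (Set.univ ×ˢ S)
  smooth_P : ContDiffOn ℝ 2 (fun p : ℝ × ℝ => P p.1 p.2) (Set.univ ×ˢ S)
  smooth_ω : ContDiffOn ℝ 2 (fun p : ℝ × ℝ => ω p.1 p.2) (Set.univ ×ˢ S)
  smooth_h : ContDiffOn ℝ 2 (fun p : ℝ × ℝ => h p.1 p.2) (Set.univ ×ˢ S)
  /-- (i) `∂ₜ J = ∂_y u` -/
  mass : ∀ y : ℝ, ∀ t ∈ S, pdt J y t = pdy u y t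
  /-- (ii) `ρ₀ ∂ₜ u − λ ∂_y(∂_y u / J) + ∂_y P + (1/(4π)) h·∂_y h = 0` -/
  momentum : ∀ y : ℝ, ∀ t ∈ S,
    ρ₀ y * pdt u y t - lam * pdy (fun z s => pdy u z s / J z s) y t
      + pdy P y t + (1 / (4 * π)) * ⟪h y t, pdyV h y t⟫_ℝ = 0
  /-- (iii) `ρ₀ ∂ₜ ω − μ ∂_y(∂_y ω / J) = (1/(4π)) ∂_y h` -/
  momentumT : ∀ y : ℝ, ∀ t ∈ S,
    ρ₀ y • pdtV ω y t - mu • pdyV (fun z s => (J z s)⁻¹ • pdyV ω z s) y t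
      = (1 / (4 * π)) • pdyV h y t
  /-- (iv) `∂ₜ h + (∂_y u / J) h − ∂_y ω / J = 0` -/
  magnetic : ∀ y : ℝ, ∀ t ∈ S,
    pdtV h y t + (pdy u y t / J y t) • h y t - (J y t)⁻¹ • pdyV ω y t = 0
  /-- (v) `∂ₜ P + γ (∂_y u / J) P = (γ−1)(λ (∂_y u / J)² + μ |∂_y ω / J|²)` -/
  pressure : ∀ y : ℝ, ∀ t ∈ S,
    pdt P y t + gam * (pdy u y t / J y t) * P y t
      = (gam - 1) * (lam * (pdy u y t / J y t) ^ 2 + mu * ‖(J y t)⁻¹ • pdyV ω y t‖ ^ 2)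


/-- The effective viscous flux `G := λ ∂_y u / J − P − |h|²/(8π)`. -/
def Gflux (lam : ℝ) (J u P : ℝ → ℝ → ℝ) (h : ℝ → ℝ → E2) : ℝ → ℝ → ℝ := fun y t =>
  lam * pdy u y t / J y t - P y t - ‖h y t‖ ^ 2 / (8 * π)

/-- The transverse effective viscous flux `F := μ ∂_y ω / J + h/(4π)`. -/
def Fflux (mu : ℝ) (J : ℝ → ℝ → ℝ) (ω h : ℝ → ℝ → E2) : ℝ → ℝ → E2 := fun y t =>
  mu • ((J y t)⁻¹ • pdyV ω y t) + (1 / (4 * π)) • h y t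

/-- The squared magnetic field `H := |h|²`. -/
def Hfield (h : ℝ → ℝ → E2) : ℝ → ℝ → ℝ := fun y t => ‖h y t‖ ^ 2

/-! The momentum equation says precisely that `∂_y G = ρ₀ ∂ₜ u`, so by the symmetry of second
derivatives `∂_y (∂_y G / ρ₀) = ∂ₜ ∂_y u`. Differentiating `G` in time, the quotient rule and
`∂ₜ J = ∂_y u` give `λ ∂ₜ ∂_y u / J − λ (∂_y u / J)²`, whose first term cancels against the
diffusion term; the remaining terms are rewritten with the pressure equation and, through
`∂ₜ |h|² = 2 h·∂ₜ h`, with the magnetic equation. -/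

open Function Set Topology

section PartialDerivatives

variable {E : Type*} [NormedAddCommGroup E] [NormedSpace ℝ E]

theorem hasDerivAt_slice_fst {g : ℝ × ℝ → E} {y t : ℝ} (hg : DifferentiableAt ℝ g (y, t)) :
    HasDerivAt (fun z => g (z, t)) (fderiv ℝ g (y, t) (1, 0)) y :=
  hg.hasFDerivAt.comp_hasDerivAt y ((hasDerivAt_id y).prodMk (hasDerivAt_const y t))

theorem hasDerivAt_slice_snd {g : ℝ × ℝ → E} {y t : ℝ} (hg : DifferentiableAt ℝ g (y, t)) :
    HasDerivAt (fun s => g (y, s)) (fderiv ℝ g (y, t) (0, 1)) t :=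
  hg.hasFDerivAt.comp_hasDerivAt t ((hasDerivAt_const t y).prodMk (hasDerivAt_id t))

variable {f : ℝ → ℝ → E} {S : Set ℝ} {y t : ℝ} {n : WithTop ℕ∞}

theorem univ_prod_mem_nhds (hS : IsOpen S) (ht : t ∈ S) : univ ×ˢ S ∈ 𝓝 (y, t) :=
  prod_mem_nhds Filter.univ_mem (hS.mem_nhds ht)

theorem ContDiffOn.differentiableAt_uncurry (hS : IsOpen S)
    (hf : ContDiffOn ℝ n (uncurry f) (univ ×ˢ S)) (hn : n ≠ 0) (ht : t ∈ S) :
    DifferentiableAt ℝ (uncurry f) (y, t) :=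
  (hf.contDiffAt (univ_prod_mem_nhds hS ht)).differentiableAt hn

theorem ContDiffOn.differentiableAt_slice_fst (hS : IsOpen S)
    (hf : ContDiffOn ℝ n (uncurry f) (univ ×ˢ S)) (hn : n ≠ 0) (ht : t ∈ S) :
    DifferentiableAt ℝ (fun z => f z t) y :=
  (hasDerivAt_slice_fst (hf.differentiableAt_uncurry hS hn ht)).differentiableAt

theorem ContDiffOn.differentiableAt_slice_snd (hS : IsOpen S)
    (hf : ContDiffOn ℝ n (uncurry f) (univ ×ˢ S)) (hn : n ≠ 0) (ht : t ∈ S) :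
    DifferentiableAt ℝ (fun s => f y s) t :=
  (hasDerivAt_slice_snd (hf.differentiableAt_uncurry hS hn ht)).differentiableAt

theorem ContDiffOn.deriv_slice_fst (hS : IsOpen S)
    (hf : ContDiffOn ℝ n (uncurry f) (univ ×ˢ S)) (hn : n ≠ 0) (ht : t ∈ S) :
    deriv (fun z => f z t) y = fderiv ℝ (uncurry f) (y, t) (1, 0) :=
  (hasDerivAt_slice_fst (hf.differentiableAt_uncurry hS hn ht)).deriv

theorem ContDiffOn.deriv_slice_snd (hS : IsOpen S)
    (hf : ContDiffOn ℝ n (uncurry f) (univ ×ˢ S)) (hn : n ≠ 0) (ht : t ∈ S) :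
    deriv (fun s => f y s) t = fderiv ℝ (uncurry f) (y, t) (0, 1) :=
  (hasDerivAt_slice_snd (hf.differentiableAt_uncurry hS hn ht)).deriv

theorem ContDiffOn.contDiffOn_deriv_fst {m : WithTop ℕ∞} (hS : IsOpen S)
    (hf : ContDiffOn ℝ m (uncurry f) (univ ×ˢ S)) (hnm : n + 1 ≤ m) :
    ContDiffOn ℝ n (uncurry fun z s => deriv (fun w => f w s) z) (univ ×ˢ S) := by
  refine ((hf.fderiv_of_isOpen (isOpen_univ.prod hS) hnm).clm_apply
    (contDiffOn_const (c := ((1 : ℝ), (0 : ℝ))))).congr fun p hp => ?_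
  exact hf.deriv_slice_fst hS (ne_bot_of_le_ne_bot (by simp) hnm) hp.2

theorem ContDiffOn.deriv_deriv_comm (hS : IsOpen S)
    (hf : ContDiffOn ℝ 2 (uncurry f) (univ ×ˢ S)) (ht : t ∈ S) :
    deriv (fun s => deriv (fun z => f z s) y) t = deriv (fun z => deriv (fun s => f z s) t) y := by
  have hf₂ : ContDiffAt ℝ 2 (uncurry f) (y, t) := hf.contDiffAt (univ_prod_mem_nhds hS ht)
  have hD : DifferentiableAt ℝ (fderiv ℝ (uncurry f)) (y, t) :=
    (hf₂.fderiv_right (m := 1) (by norm_num)).differentiableAt one_ne_zero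
  have h_ty : deriv (fun s => deriv (fun z => f z s) y) t
      = fderiv ℝ (fderiv ℝ (uncurry f)) (y, t) (0, 1) (1, 0) := by
    have h := (hasDerivAt_slice_snd hD).clm_apply (hasDerivAt_const t ((1 : ℝ), (0 : ℝ)))
    simp only [ContinuousLinearMap.map_zero, add_zero] at h
    refine (h.congr_of_eventuallyEq ?_).deriv
    filter_upwards [hS.mem_nhds ht] with s hs
    exact hf.deriv_slice_fst hS two_ne_zero hs
  have h_yt : deriv (fun z => deriv (fun s => f z s) t) y
      = fderiv ℝ (fderiv ℝ (uncurry f)) (y, t) (1, 0) (0, 1) := by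
    have h := (hasDerivAt_slice_fst hD).clm_apply (hasDerivAt_const y ((0 : ℝ), (1 : ℝ)))
    simp only [ContinuousLinearMap.map_zero, add_zero] at h
    exact (h.congr_of_eventuallyEq (.of_forall fun z => hf.deriv_slice_snd hS two_ne_zero ht)).deriv
  rw [h_ty, h_yt]
  exact (hf₂.isSymmSndFDerivAt (by simp)).eq _ _

end PartialDerivatives

theorem HasDerivAt.effectiveFlux {F : Type*} [NormedAddCommGroup F] [InnerProductSpace ℝ F]
    (lam : ℝ) {q p : ℝ → ℝ} {v : ℝ → F} {x q' p' : ℝ} {v' : F}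
    (hq : HasDerivAt q q' x) (hp : HasDerivAt p p' x) (hv : HasDerivAt v v' x) :
    HasDerivAt (fun x => lam * q x - p x - ‖v x‖ ^ 2 / (8 * π))
      (lam * q' - p' - ⟪v x, v'⟫_ℝ / (4 * π)) x :=
  (((hq.const_mul lam).sub hp).sub (hv.norm_sq.div_const (8 * π))).congr_deriv (by ring)

theorem Gflux_apply (lam : ℝ) (J u P : ℝ → ℝ → ℝ) (h : ℝ → ℝ → E2) (y t : ℝ) :
    Gflux lam J u P h y t = lam * (pdy u y t / J y t) - P y t - ‖h y t‖ ^ 2 / (8 * π) := by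
  rw [Gflux, mul_div_assoc]

namespace IsMHDSolution

variable {lam mu gam : ℝ} {ρ₀ : ℝ → ℝ} {J u P : ℝ → ℝ → ℝ} {ω h : ℝ → ℝ → E2} {S : Set ℝ}
  {y t : ℝ}

theorem contDiffOn_pdy_u (hsol : IsMHDSolution lam mu gam ρ₀ J u P ω h S) (hS : IsOpen S) :
    ContDiffOn ℝ 1 (uncurry (pdy u)) (univ ×ˢ S) :=
  hsol.smooth_u.contDiffOn_deriv_fst hS (by norm_num)

theorem pdy_Gflux (hsol : IsMHDSolution lam mu gam ρ₀ J u P ω h S) (hS : IsOpen S)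
    (ht : t ∈ S) (hJ : J y t ≠ 0) : pdy (Gflux lam J u P h) y t = ρ₀ y * pdt u y t := by
  have hq : HasDerivAt (fun z => pdy u z t / J z t) (pdy (fun z s => pdy u z s / J z s) y t) y :=
    ((hsol.contDiffOn_pdy_u hS).differentiableAt_slice_fst hS one_ne_zero ht).div
      (hsol.smooth_J.differentiableAt_slice_fst hS two_ne_zero ht) hJ |>.hasDerivAt
  have hP : HasDerivAt (fun z => P z t) (pdy P y t) y :=
    (hsol.smooth_P.differentiableAt_slice_fst hS two_ne_zero ht).hasDerivAt
  have hh : HasDerivAt (fun z => h z t) (pdyV h y t) y :=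
    (hsol.smooth_h.differentiableAt_slice_fst hS two_ne_zero ht).hasDerivAt
  have hG := hq.effectiveFlux lam hP hh
  rw [pdy, funext fun z => Gflux_apply lam J u P h z t, hG.deriv]
  linear_combination -(hsol.momentum y t ht)

theorem pdt_Gflux (hsol : IsMHDSolution lam mu gam ρ₀ J u P ω h S) (hS : IsOpen S)
    (ht : t ∈ S) (hJ : J y t ≠ 0) :
    pdt (Gflux lam J u P h) y t
      = lam * ((pdt (pdy u) y t * J y t - pdy u y t * pdy u y t) / J y t ^ 2)
        - pdt P y t - ⟪h y t, pdtV h y t⟫_ℝ / (4 * π) := by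
  have hJt : HasDerivAt (fun s => J y s) (pdy u y t) t :=
    hsol.mass y t ht ▸ (hsol.smooth_J.differentiableAt_slice_snd hS two_ne_zero ht).hasDerivAt
  have hq : HasDerivAt (fun s => pdy u y s / J y s)
      ((pdt (pdy u) y t * J y t - pdy u y t * pdy u y t) / J y t ^ 2) t :=
    ((hsol.contDiffOn_pdy_u hS).differentiableAt_slice_snd hS one_ne_zero ht).hasDerivAt.div
      hJt hJ
  have hP : HasDerivAt (fun s => P y s) (pdt P y t) t :=
    (hsol.smooth_P.differentiableAt_slice_snd hS two_ne_zero ht).hasDerivAt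
  have hh : HasDerivAt (fun s => h y s) (pdtV h y t) t :=
    (hsol.smooth_h.differentiableAt_slice_snd hS two_ne_zero ht).hasDerivAt
  have hG := hq.effectiveFlux lam hP hh
  rw [pdt, funext fun s => Gflux_apply lam J u P h y s, hG.deriv]

theorem inner_pdtV_h (hsol : IsMHDSolution lam mu gam ρ₀ J u P ω h S) (ht : t ∈ S) :
    ⟪h y t, pdtV h y t⟫_ℝ
      = (J y t)⁻¹ * ⟪h y t, pdyV ω y t⟫_ℝ - pdy u y t / J y t * ‖h y t‖ ^ 2 := by
  rw [eq_sub_of_add_eq (sub_eq_zero.1 (hsol.magnetic y t ht)), inner_sub_right,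
    inner_smul_right, inner_smul_right, real_inner_self_eq_norm_sq]

end IsMHDSolution

theorem stmt_5_general (T lam mu gam : ℝ) (ρ₀ : ℝ → ℝ) (hρpos : ∀ y : ℝ, 0 < ρ₀ y)
    (J u P : ℝ → ℝ → ℝ) (ω h : ℝ → ℝ → E2)
    (hJpos : ∀ y : ℝ, ∀ t ∈ Set.Ioo (0 : ℝ) T, 0 < J y t)
    (hsol : IsMHDSolution lam mu gam ρ₀ J u P ω h (Set.Ioo 0 T)) :
    ∀ y : ℝ, ∀ t ∈ Set.Ioo (0 : ℝ) T,
      pdt (Gflux lam J u P h) y t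
          - (lam / J y t) * pdy (fun z s => pdy (Gflux lam J u P h) z s / ρ₀ z) y t
        = -gam * (pdy u y t / J y t) * Gflux lam J u P h y t
          + ((2 - gam) / (8 * π)) * (pdy u y t / J y t) * ‖h y t‖ ^ 2
          - (gam - 1) * mu * ‖(J y t)⁻¹ • pdyV ω y t‖ ^ 2
          - (1 / (4 * π * J y t)) * ⟪h y t, pdyV ω y t⟫_ℝ := by
  intro y t ht
  have hJ : ∀ z, J z t ≠ 0 := fun z => (hJpos z t ht).ne'
  have hJy := hJ y
  have h_flux : (fun z => pdy (Gflux lam J u P h) z t / ρ₀ z) = fun z => pdt u z t :=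
    funext fun z => by
      rw [hsol.pdy_Gflux isOpen_Ioo ht (hJ z), mul_div_cancel_left₀ _ (hρpos z).ne']
  have h_second : pdy (fun z s => pdy (Gflux lam J u P h) z s / ρ₀ z) y t = pdt (pdy u) y t :=
    (congrArg (deriv · y) h_flux).trans (hsol.smooth_u.deriv_deriv_comm isOpen_Ioo ht).symm
  rw [hsol.pdt_Gflux isOpen_Ioo ht (hJ y), h_second, hsol.inner_pdtV_h ht,
    eq_sub_of_add_eq (hsol.pressure y t ht), Gflux_apply]
  field_simp
  ring

/-- for a classical solution of the planar non-resistive MHD system in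
Lagrangian coordinates on `ℝ × (0,T)` with `J > 0` and `ρ₀ > 0`, `ρ₀` differentiable,
the effective viscous flux `G := λ ∂_y u / J − P − |h|²/(8π)` satisfies pointwise
`∂ₜ G − (λ/J) ∂_y(∂_y G / ρ₀)
  = −γ (∂_y u / J) G + ((2−γ)/(8π)) (∂_y u / J) |h|² − (γ−1) μ |∂_y ω / J|²
    − (1/(4πJ)) h·∂_y ω`. -/
theorem stmt_5 (T lam mu gam : ℝ) (hT : 0 < T) (hlam : 0 < lam) (hmu : 0 < mu)
    (hgam : 1 < gam) (ρ₀ : ℝ → ℝ) (hρpos : ∀ y : ℝ, 0 < ρ₀ y)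
    (hρdiff : Differentiable ℝ ρ₀)
    (J u P : ℝ → ℝ → ℝ) (ω h : ℝ → ℝ → E2)
    (hJpos : ∀ y : ℝ, ∀ t ∈ Set.Ioo (0 : ℝ) T, 0 < J y t)
    (hsol : IsMHDSolution lam mu gam ρ₀ J u P ω h (Set.Ioo 0 T)) :
    ∀ y : ℝ, ∀ t ∈ Set.Ioo (0 : ℝ) T,
      pdt (Gflux lam J u P h) y t
          - (lam / J y t) * pdy (fun z s => pdy (Gflux lam J u P h) z s / ρ₀ z) y t
        = -gam * (pdy u y t / J y t) * Gflux lam J u P h y t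
          + ((2 - gam) / (8 * π)) * (pdy u y t / J y t) * ‖h y t‖ ^ 2
          - (gam - 1) * mu * ‖(J y t)⁻¹ • pdyV ω y t‖ ^ 2
          - (1 / (4 * π * J y t)) * ⟪h y t, pdyV ω y t⟫_ℝ :=
  stmt_5_general T lam mu gam ρ₀ hρpos J u P ω h hJpos hsol
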